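/- Let G be a connected graph, v ∈ V(G), and H be obtained from G by attaching a pendant u to v. If S is a metric basis of H containing u, then (S \ {u}) ∪ {v} is a resolving set of G. -/

import Mathlib

open SimpleGraph

def isResolving {V : Type*} (G : SimpleGraph V) (S : Set V) : Prop :=
  ∀ x y : V, x ≠ y → ∃ s ∈ S, G.dist s x ≠ G.dist s y

noncomputable def metricDim {V : Type*} (G : SimpleGraph V) : ℕ :=
  sInf {n | ∃ S : Set V, isResolving G S ∧ S.ncard = n}

def isMetricBasis {V : Type*} (G : SimpleGraph V) (S : Set V) : Prop :=
  isResolving G S ∧ S.ncard = metricDim G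

def isBasisForced {V : Type*} (G : SimpleGraph V) (v : V) : Prop :=
  ∀ S : Set V, isMetricBasis G S → v ∈ S

def attachPendant {V : Type*} (G : SimpleGraph V) (v : V) : SimpleGraph (Option V) :=
  SimpleGraph.fromRel (fun x y =>
    (∃ a b, x = some a ∧ y = some b ∧ G.Adj a b) ∨ (x = some v ∧ y = none))

/-!
Between vertices of `G`, distances in `H` and in `G` agree: `G` embeds in `H`, and collapsing the
pendant `u` onto `v` maps walks of `H` to walks of `G` that are no longer. Since every walk leaving
`u` first steps to `v`, moreover `d_H(u, x) = d_G(v, x) + 1`. Hence a vertex of `S` that separates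
`x` and `y` in `H` separates them in `G`, unless it is `u`, in which case `v` does.
-/

namespace SimpleGraph

variable {V W : Type*} {G : SimpleGraph V} {H : SimpleGraph W} {f : W → V}

theorem Walk.exists_length_le_of_map_eq_or_adj
    (hf : ∀ ⦃x y⦄, H.Adj x y → f x = f y ∨ G.Adj (f x) (f y)) {x y : W} (p : H.Walk x y) :
    ∃ q : G.Walk (f x) (f y), q.length ≤ p.length := by
  induction p with
  | nil => exact ⟨.nil, le_rfl⟩
  | cons hadj _ ih =>
    obtain ⟨q, hq⟩ := ih
    rcases hf hadj with heq | hadj'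
    · exact ⟨q.copy heq.symm rfl, by simp only [Walk.length_copy, Walk.length_cons]; omega⟩
    · exact ⟨.cons hadj' q, by simp only [Walk.length_cons]; omega⟩

theorem Reachable.map_of_eq_or_adj
    (hf : ∀ ⦃x y⦄, H.Adj x y → f x = f y ∨ G.Adj (f x) (f y)) {x y : W} (h : H.Reachable x y) :
    G.Reachable (f x) (f y) :=
  h.elim fun p => (p.exists_length_le_of_map_eq_or_adj hf).choose.reachable

theorem dist_map_le_of_eq_or_adj
    (hf : ∀ ⦃x y⦄, H.Adj x y → f x = f y ∨ G.Adj (f x) (f y)) {x y : W} (h : H.Reachable x y) :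
    G.dist (f x) (f y) ≤ H.dist x y := by
  obtain ⟨p, hp⟩ := h.exists_walk_length_eq_dist
  obtain ⟨q, hq⟩ := p.exists_length_le_of_map_eq_or_adj hf
  exact hp ▸ (dist_le q).trans hq

theorem Hom.dist_map_le (φ : H →g G) {x y : W} (h : H.Reachable x y) :
    G.dist (φ x) (φ y) ≤ H.dist x y :=
  dist_map_le_of_eq_or_adj (fun _ _ hxy => .inr (φ.map_adj hxy)) h

theorem dist_eq_dist_add_one_of_adj_imp_eq {u w x : W} (hu : ∀ ⦃y⦄, H.Adj u y → y = w)
    (huw : H.Adj u w) (hxu : x ≠ u) (hwx : H.Reachable w x) :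
    H.dist u x = H.dist w x + 1 := by
  apply le_antisymm
  · obtain ⟨p, hp⟩ := hwx.exists_walk_length_eq_dist
    simpa [hp] using dist_le (.cons huw p)
  · obtain ⟨p, hp⟩ := (huw.reachable.trans hwx).exists_walk_length_eq_dist
    cases p with
    | nil => exact absurd rfl hxu
    | cons hadj q =>
      obtain rfl := hu hadj
      simpa [← hp] using dist_le q

end SimpleGraph

section attachPendant

variable {V : Type*} (G : SimpleGraph V) (v : V)

@[simp]
theorem attachPendant_adj_some_some {a b : V} :
    (attachPendant G v).Adj (some a) (some b) ↔ G.Adj a b := by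
  simpa [attachPendant, G.adj_comm b a] using G.ne_of_adj

@[simp]
theorem attachPendant_adj_none {x : Option V} :
    (attachPendant G v).Adj none x ↔ x = some v := by
  simpa [attachPendant] using fun h => h ▸ (Option.some_ne_none v).symm

theorem attachPendant_adj_getD {x y : Option V} (h : (attachPendant G v).Adj x y) :
    x.getD v = y.getD v ∨ G.Adj (x.getD v) (y.getD v) := by
  match x, y with
  | some a, some b => exact .inr ((attachPendant_adj_some_some G v).1 h)
  | none, y => simp [(attachPendant_adj_none G v).1 h]
  | x, none => simp [(attachPendant_adj_none G v).1 h.symm]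

def attachPendantHom : G →g attachPendant G v :=
  ⟨some, (attachPendant_adj_some_some G v).2⟩

theorem attachPendant_dist_some_some {a b : V} (h : G.Reachable a b) :
    (attachPendant G v).dist (some a) (some b) = G.dist a b :=
  le_antisymm ((attachPendantHom G v).dist_map_le h)
    (dist_map_le_of_eq_or_adj (fun _ _ => attachPendant_adj_getD G v)
      (h.map (attachPendantHom G v)))

theorem attachPendant_dist_none_some {a : V} (h : G.Reachable v a) :
    (attachPendant G v).dist none (some a) = G.dist v a + 1 := by
  rw [dist_eq_dist_add_one_of_adj_imp_eq (fun _ => (attachPendant_adj_none G v).1)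
    ((attachPendant_adj_none G v).2 rfl) (Option.some_ne_none a) (h.map (attachPendantHom G v)),
    attachPendant_dist_some_some G v h]

end attachPendant

theorem stmt3_general {V : Type*} (G : SimpleGraph V) (hG : G.Connected)
    (v : V) (S : Set (Option V))
    (hS : isMetricBasis (attachPendant G v) S) :
    isResolving G (insert v (some ⁻¹' S)) := by
  intro x y hxy
  obtain ⟨s, hs, hd⟩ := hS.1 (some x) (some y) (Option.some_injective V |>.ne hxy)
  cases s with
  | none =>
    refine ⟨v, Set.mem_insert v _, fun h => hd ?_⟩
    rw [attachPendant_dist_none_some G v (hG v x), attachPendant_dist_none_some G v (hG v y), h]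
  | some a =>
    refine ⟨a, Set.mem_insert_of_mem v hs, ?_⟩
    rwa [attachPendant_dist_some_some G v (hG a x), attachPendant_dist_some_some G v (hG a y)] at hd

theorem stmt3 {V : Type*} [Fintype V] (G : SimpleGraph V) (hG : G.Connected)
    (v : V) (S : Set (Option V))
    (hS : isMetricBasis (attachPendant G v) S) (hu : (none : Option V) ∈ S) :
    isResolving G (insert v (some ⁻¹' S)) :=
  stmt3_general G hG v S hS
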